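/- The pair (s, δ_1) is a super Lie bialgebra: δ_1 satisfies the 1-cocycle compatibility δ_1([a,b]) = [δ_1(a), b⊗1+1⊗b] + [a⊗1+1⊗a, δ_1(b)] for all a, b in s, where the bracket of g with u⊗v acts by the super adjoint action. -/

import Mathlib

/- ## The Lie superalgebra sl(2,1) as 3x3 supermatrices (grading 2|1) over ℚ -/

abbrev M3 := Matrix (Fin 3) (Fin 3) ℚ

/-- sign (-1)^b -/
def sgn (b : Bool) : ℚ := if b then -1 else 1

/-- parity of the index i (grading 2|1): rows/columns 0,1 even, 2 odd -/
def σ3 (i : Fin 3) : Bool := decide (i = (2 : Fin 3))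

/-- parity of the matrix unit E i j -/
def pi3 (i j : Fin 3) : Bool := σ3 i != σ3 j

/-- even part of a supermatrix -/
def evM (m : M3) : M3 := Matrix.of (fun i j => if σ3 i = σ3 j then m i j else 0)

/-- odd part of a supermatrix -/
def odM (m : M3) : M3 := Matrix.of (fun i j => if σ3 i = σ3 j then 0 else m i j)

/-- the super commutator, i.e. the bilinear extension of
    [x,y] = xy - (-1)^{|x||y|} yx on homogeneous elements -/
def sbr (x y : M3) : M3 := x * y - (evM y * x + odM y * evM x - odM y * odM x)

/-- matrix units -/
def Eu (i j : Fin 3) : M3 := Matrix.single i j 1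

/-- E11 + E33 (0-indexed: E00 + E22) -/
def A3 : M3 := Eu 0 0 + Eu 2 2

/-- E22 + E33 (0-indexed: E11 + E22) -/
def B3 : M3 := Eu 1 1 + Eu 2 2

/-- the supertrace -/
def str (m : M3) : ℚ := m 0 0 + m 1 1 - m 2 2

/-- sl(2,1): supermatrices with supertrace zero -/
def sl21 : Submodule ℚ M3 where
  carrier := {m | str m = 0}
  add_mem' := by
    intro a b ha hb
    simp only [Set.mem_setOf_eq, str, Matrix.add_apply] at *
    linarith
  zero_mem' := by simp [str]
  smul_mem' := by
    intro c m hm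
    simp only [Set.mem_setOf_eq, str, Matrix.smul_apply, smul_eq_mul] at *
    linear_combination c * hm

/-- m is homogeneous of parity p -/
def homogM (m : M3) (p : Bool) : Prop := m = (if p then odM m else evM m)

/- ## Tensors: g ⊗ g realized as 4-index arrays -/

abbrev T3 := Fin 3 → Fin 3 → Fin 3 → Fin 3 → ℚ

/-- a ⊗ b -/
def tm (a b : M3) : T3 := fun i j k l => a i j * b k l

/-- the super permutation map T_s(a ⊗ b) = (-1)^{|a||b|} b ⊗ a -/
def TsM (t : T3) : T3 := fun i j k l => sgn (pi3 i j && pi3 k l) * t k l i j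

/-- a ∧ b = a ⊗ b - (-1)^{|a||b|} b ⊗ a -/
def wdg (a b : M3) : T3 := tm a b - TsM (tm a b)

/-- the Casimir 2-tensor Ω of sl(2,1) -/
def Omega : T3 :=
  tm A3 (-B3) + tm (-B3) A3 + tm (Eu 0 1) (Eu 1 0) + tm (Eu 1 0) (Eu 0 1)
  - tm (Eu 0 2) (Eu 2 0) + tm (Eu 2 0) (Eu 0 2) - tm (Eu 1 2) (Eu 2 1) + tm (Eu 2 1) (Eu 1 2)

/-- the r-matrix r(f) -/
def rf : T3 :=
  tm (-B3) A3 + tm (Eu 0 1) (Eu 1 0) - tm (Eu 0 2) (Eu 2 0)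
  + tm (Eu 2 1) (Eu 1 2) - tm (Eu 0 2) (Eu 0 2) + tm (Eu 1 2) (Eu 1 2)

/-- the standard r-matrix r_s -/
def rs : T3 :=
  tm (-B3) A3 + tm (Eu 0 1) (Eu 1 0) - tm (Eu 0 2) (Eu 2 0) + tm (Eu 2 1) (Eu 1 2)

/-- the super adjoint action of g on g ⊗ g:
    g · (a ⊗ b) = [g,a] ⊗ b + (-1)^{|g||a|} a ⊗ [g,b]  (= [g⊗1 + 1⊗g, t]) -/
def act (g : M3) (t : T3) : T3 := fun i j k l =>
  sbr g (Matrix.of (fun a b => t a b k l)) i j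
  + sbr (evM g) (Matrix.of (fun a b => t i j a b)) k l
  + sgn (pi3 i j) * sbr (odM g) (Matrix.of (fun a b => t i j a b)) k l

/-- the cocommutator δ_f(g) = [g⊗1 + 1⊗g, r(f)] -/
def δf (g : M3) : T3 := act g rf

/-- the standard cocommutator δ_s(g) = [g⊗1 + 1⊗g, r_s] -/
def δs (g : M3) : T3 := act g rs

/-- the linear map f defining r(f) -/
def fmap (m : M3) : M3 :=
  m 1 1 • B3 + m 0 1 • Eu 0 1 + (m 0 2 - m 2 0) • Eu 0 2 + m 2 1 • (Eu 1 2 + Eu 2 1)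

/- ## Distinguished subalgebras -/

def S1 : Submodule ℚ M3 := Submodule.span ℚ {A3, Eu 1 0, Eu 1 2, Eu 0 2 + Eu 2 0}
def S2 : Submodule ℚ M3 := Submodule.span ℚ {B3, Eu 0 1, Eu 0 2, Eu 1 2 + Eu 2 1}
def T1 : Submodule ℚ M3 := Submodule.span ℚ {A3, Eu 1 0, Eu 1 2, Eu 2 0}
def T2 : Submodule ℚ M3 := Submodule.span ℚ {B3, Eu 0 1, Eu 0 2, Eu 2 1}

/-- S1 ⊗ S1 inside T3 -/
def TS1 : Submodule ℚ T3 := Submodule.span ℚ {t : T3 | ∃ a ∈ S1, ∃ b ∈ S1, t = tm a b}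
/-- S2 ⊗ S2 inside T3 -/
def TS2 : Submodule ℚ T3 := Submodule.span ℚ {t : T3 | ∃ a ∈ S2, ∃ b ∈ S2, t = tm a b}

/- ## The abstract 4-dimensional Lie superalgebras s and t
     basis: e0 = h, e1 = x (even), e2 = y1, e3 = y2 (odd) -/

abbrev V4 := Fin 4 → ℚ

/-- parity of the basis vectors of s (h, x even; y1, y2 odd) -/
def pV (i : Fin 4) : Bool := decide (2 ≤ i.val)

/-- basis vectors -/
def eV (i : Fin 4) : V4 := fun j => if j = i then 1 else 0

/-- structure constants of s: [h,x] = -x, [h,y1] = -y1, [x,y2] = y1,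
    [y1,y2] = x, [y2,y2] = 2h (and super-antisymmetric partners) -/
def cS : Fin 4 → Fin 4 → V4 :=
  ![![0, -eV 1, -eV 2, 0],
    ![eV 1, 0, 0, eV 2],
    ![eV 2, 0, 0, eV 1],
    ![0, -eV 2, eV 1, (2 : ℚ) • eV 0]]

/-- the bracket of s -/
def brS (u v : V4) : V4 := fun k => ∑ i : Fin 4, ∑ j : Fin 4, u i * v j * cS i j k

/-- structure constants of t: [h,x] = -x, [h,y1] = -y1, [y1,y2] = x -/
def cT : Fin 4 → Fin 4 → V4 :=
  ![![0, -eV 1, -eV 2, 0],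
    ![eV 1, 0, 0, 0],
    ![eV 2, 0, 0, eV 1],
    ![0, 0, eV 1, 0]]

/-- the bracket of t -/
def brT (u v : V4) : V4 := fun k => ∑ i : Fin 4, ∑ j : Fin 4, u i * v j * cT i j k

/-- even part in s -/
def evV (u : V4) : V4 := fun i => if pV i then 0 else u i
/-- odd part in s -/
def odV (u : V4) : V4 := fun i => if pV i then u i else 0
/-- u is homogeneous of parity p -/
def homogV (u : V4) (p : Bool) : Prop := u = (if p then odV u else evV u)

/-- derived series of s -/
def derS : ℕ → Submodule ℚ V4
  | 0 => ⊤
  | n + 1 => Submodule.span ℚ {w : V4 | ∃ u ∈ derS n, ∃ v ∈ derS n, w = brS u v}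

/- ## Tensors over s -/

abbrev TV := Fin 4 → Fin 4 → ℚ
abbrev T3V := Fin 4 → Fin 4 → Fin 4 → ℚ

def tmV (u v : V4) : TV := fun i j => u i * v j
def TsV (t : TV) : TV := fun i j => sgn (pV i && pV j) * t j i
/-- a ∧ b in s ⊗ s -/
def wdgV (u v : V4) : TV := tmV u v - TsV (tmV u v)

/-- the cocommutator δ_1 on s: δ_1(h) = -y1∧y1, δ_1(x) = x∧h - y1∧y2,
    δ_1(y1) = 0, δ_1(y2) = y2∧h + x∧y1 -/
def δ1 (u : V4) : TV :=
  u 0 • (-(wdgV (eV 2) (eV 2)))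
  + u 1 • (wdgV (eV 1) (eV 0) - wdgV (eV 2) (eV 3))
  + u 3 • (wdgV (eV 3) (eV 0) + wdgV (eV 1) (eV 2))

/-- the cocommutator δ_2 on s: δ_2(h) = y1∧y1, δ_2(x) = -(x∧h - y1∧y2),
    δ_2(y1) = 0, δ_2(y2) = -(y2∧h + x∧y1) -/
def δ2 (u : V4) : TV :=
  u 0 • (wdgV (eV 2) (eV 2))
  + u 1 • (-(wdgV (eV 1) (eV 0) - wdgV (eV 2) (eV 3)))
  + u 3 • (-(wdgV (eV 3) (eV 0) + wdgV (eV 1) (eV 2)))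

/-- super pairing ⟨α⊗β, u⊗v⟩ = (-1)^{|β||u|} α(u) β(v), with α, β written in the
    dual basis coordinates -/
def pairV (al be : V4) (t : TV) : ℚ :=
  ∑ i : Fin 4, ∑ j : Fin 4, sgn (pV i && pV j) * al i * be j * t i j

/-- the bracket on s* induced by δ_1: ⟨[α,β], s⟩ = ⟨α⊗β, δ_1(s)⟩ -/
def dbr (al be : V4) : V4 := fun k => pairV al be (δ1 (eV k))

/-- the linear map s* → s given by h* ↦ h, x* ↦ x, y1* ↦ y2, y2* ↦ y1 -/
def θS (al : V4) : V4 := fun k => al (![0, 1, 3, 2] k)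

/-- (δ_1 ⊗ Id) on tensors -/
def d1Id (t : TV) : T3V := fun i j k => ∑ a : Fin 4, δ1 (eV a) i j * t a k

/-- the super cyclic symmetrizer Alt_s on 3-tensors -/
def AltS (t : T3V) : T3V := fun i j k =>
  t i j k + sgn (pV k && (pV i != pV j)) * t k i j + sgn (pV i && (pV j != pV k)) * t j k i

/-- super adjoint action of g ∈ s on s ⊗ s -/
def actV (g : V4) (t : TV) : TV := fun i j =>
  (∑ a : Fin 4, brS g (eV a) i * t a j)
  + (∑ b : Fin 4, t i b * (brS (evV g) (eV b) j + sgn (pV i) * brS (odV g) (eV b) j))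

/- ## identification maps -/

/-- the map s → sl(2,1) inverse to S1 → s, A ↦ -h, E21 ↦ x, E13+E31 ↦ -y2, E23 ↦ y1 -/
def ψ9 (u : V4) : M3 := u 0 • (-A3) + u 1 • Eu 1 0 + u 2 • Eu 1 2 + u 3 • (-(Eu 0 2 + Eu 2 0))

/-- the map s → sl(2,1), h ↦ E22+E33, x ↦ E12, y1 ↦ E13, y2 ↦ E23+E32 -/
def ψ10 (u : V4) : M3 := u 0 • B3 + u 1 • Eu 0 1 + u 2 • Eu 0 2 + u 3 • (Eu 1 2 + Eu 2 1)

/-- the map t → sl(2,1), h ↦ E22+E33, x ↦ E12, y1 ↦ E13, y2 ↦ E32 -/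
def ψ18 (u : V4) : M3 := u 0 • B3 + u 1 • Eu 0 1 + u 2 • Eu 0 2 + u 3 • Eu 2 1

/-! Homogeneous elements have only two nonzero coordinates (`h, x` when even, `y1, y2` when odd),
so for each pair of parities the cocycle identity becomes a polynomial identity in four
coordinates, checked entry by entry. The odd–even case reduces to the even–odd one by super
antisymmetry: `[b, a] = -[a, b]` whenever `a` is even. -/

lemma brS_eq (u v : V4) : brS u v =
    ![2 * u 3 * v 3, u 1 * v 0 - u 0 * v 1 + u 2 * v 3 + u 3 * v 2,
      u 1 * v 3 - u 0 * v 2 + u 2 * v 0 - u 3 * v 1, 0] := by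
  funext k
  fin_cases k <;> simp [brS, Fin.sum_univ_four, cS, eV] <;> ring

lemma δ1_eq (u : V4) : δ1 u =
    ![![0, -u 1, 0, -u 3], ![u 1, 0, u 3, 0], ![0, -u 3, -2 * u 0, -u 1], ![u 3, 0, -u 1, 0]] := by
  funext i j
  fin_cases i <;> fin_cases j <;> simp [δ1, wdgV, tmV, TsV, sgn, pV, eV]
  ring

lemma δ1_neg (u : V4) : δ1 (-u) = -δ1 u := by
  simp only [δ1_eq, Pi.neg_apply, neg_neg, mul_neg]
  funext i j
  fin_cases i <;> fin_cases j <;> simp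

lemma homogV_false_iff (u : V4) : homogV u false ↔ u 2 = 0 ∧ u 3 = 0 := by
  simp [homogV, evV, funext_iff, Fin.forall_fin_succ, pV, eq_comm]

lemma homogV_true_iff (u : V4) : homogV u true ↔ u 0 = 0 ∧ u 1 = 0 := by
  simp [homogV, odV, funext_iff, Fin.forall_fin_succ, pV, eq_comm]

lemma brS_comm_of_even (a b : V4) (ha2 : a 2 = 0) (ha3 : a 3 = 0) : brS b a = -brS a b := by
  simp only [brS_eq, ha2, ha3]
  funext k
  fin_cases k <;> simp <;> ring

lemma cocycle_even_even (a b : V4) (ha2 : a 2 = 0) (ha3 : a 3 = 0) (hb2 : b 2 = 0) (hb3 : b 3 = 0) :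
    δ1 (brS a b) = actV a (δ1 b) - actV b (δ1 a) := by
  funext i j
  fin_cases i <;> fin_cases j <;>
    simp [brS_eq, δ1_eq, actV, sgn, pV, eV, evV, odV, Fin.sum_univ_four, ha2, ha3, hb2, hb3] <;> ring

lemma cocycle_even_odd (a b : V4) (ha2 : a 2 = 0) (ha3 : a 3 = 0) (hb0 : b 0 = 0) (hb1 : b 1 = 0) :
    δ1 (brS a b) = actV a (δ1 b) - actV b (δ1 a) := by
  funext i j
  fin_cases i <;> fin_cases j <;>
    simp [brS_eq, δ1_eq, actV, sgn, pV, eV, evV, odV, Fin.sum_univ_four, ha2, ha3, hb0, hb1] <;> ring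

lemma cocycle_odd_odd (a b : V4) (ha0 : a 0 = 0) (ha1 : a 1 = 0) (hb0 : b 0 = 0) (hb1 : b 1 = 0) :
    δ1 (brS a b) = actV a (δ1 b) + actV b (δ1 a) := by
  funext i j
  fin_cases i <;> fin_cases j <;>
    simp [brS_eq, δ1_eq, actV, sgn, pV, eV, evV, odV, Fin.sum_univ_four, ha0, ha1, hb0, hb1] <;> ring

lemma cocycle_odd_even (a b : V4) (ha0 : a 0 = 0) (ha1 : a 1 = 0) (hb2 : b 2 = 0) (hb3 : b 3 = 0) :
    δ1 (brS a b) = actV a (δ1 b) - actV b (δ1 a) := by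
  rw [brS_comm_of_even b a hb2 hb3, δ1_neg, cocycle_even_odd b a hb2 hb3 ha0 ha1, neg_sub]

/-- (s, δ_1) is a super Lie bialgebra: δ_1 is a 1-cocycle,
    δ_1([a,b]) = a·δ_1(b) - (-1)^{|a||b|} b·δ_1(a) for homogeneous a, b -/
theorem stmt17 : ∀ (a b : V4) (pa pb : Bool), homogV a pa → homogV b pb →
    δ1 (brS a b) = actV a (δ1 b) - sgn (pa && pb) • actV b (δ1 a) := by
  intro a b pa pb ha hb
  cases pa <;> cases pb <;> simp only [homogV_false_iff, homogV_true_iff] at ha hb <;>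
    simp only [sgn, Bool.and_self, Bool.and_true, Bool.and_false, Bool.false_eq_true, if_true,
      if_false, one_smul, neg_smul, sub_neg_eq_add]
  · exact cocycle_even_even a b ha.1 ha.2 hb.1 hb.2
  · exact cocycle_even_odd a b ha.1 ha.2 hb.1 hb.2
  · exact cocycle_odd_even a b ha.1 ha.2 hb.1 hb.2
  · exact cocycle_odd_odd a b ha.1 ha.2 hb.1 hb.2
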